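/- If liminf_{k→∞} S_ξ(k) = −∞ along the path used by the penalised walk, then T(k) → ∞ as k → ∞: the penalised walk visits (−∞, 0] infinitely often. -/
import Mathlib


open Filter MeasureTheory ProbabilityTheory

noncomputable section

/-- Partial sum `a 0 + ⋯ + a (k-1)` (so `a i` plays the role of the `(i+1)`-st increment). -/
def pSum (a : ℕ → ℝ) (k : ℕ) : ℝ := ∑ i ∈ Finset.range k, a i

/-- The counter `T(n) = #{k < n : S̃(k) ≤ 0}` of the penalised walk, defined recursively. -/
def Tcnt (ξ η : ℕ → ℝ) : ℕ → ℕ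
  | 0 => 0
  | n + 1 =>
      Tcnt ξ η n + (if pSum ξ (n - Tcnt ξ η n) + pSum η (Tcnt ξ η n) ≤ 0 then 1 else 0)

/-- The penalised walk `S̃(n) = S_ξ(n − T(n)) + S_η(T(n))`. -/
def Stil (ξ η : ℕ → ℝ) (n : ℕ) : ℝ :=
  pSum ξ (n - Tcnt ξ η n) + pSum η (Tcnt ξ η n)

/-- Running minimum `min_{0 ≤ j ≤ k} S_ξ(j)`. -/
def runMin (ξ : ℕ → ℝ) (k : ℕ) : ℝ :=
  (Finset.range (k + 1)).inf' (Finset.nonempty_range_iff.mpr (Nat.succ_ne_zero k)) (pSum ξ)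

/-- `max_{1 ≤ i ≤ m} |a_i|` (equal to `0` if `m = 0`). -/
def maxAbs (a : ℕ → ℝ) (m : ℕ) : ℝ := ⨆ i ∈ Finset.range m, |a i|

/-- First passage time `N_η(x) = inf{k ≥ 1 : S_η(k) > x}`. -/
def Nhit (η : ℕ → ℝ) (x : ℝ) : ℕ := sInf {k : ℕ | x < pSum η k}

end

lemma Tcnt_mono (ξ η : ℕ → ℝ) : Monotone (Tcnt ξ η) := by
  apply monotone_nat_of_le_succ
  intro n
  show Tcnt ξ η n ≤ Tcnt ξ η n + _
  exact Nat.le_add_right _ _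

lemma Tcnt_le (ξ η : ℕ → ℝ) : ∀ n, Tcnt ξ η n ≤ n := by
  intro n
  induction n with
  | zero => simp [Tcnt]
  | succ n ih =>
    show Tcnt ξ η n + _ ≤ n + 1
    split <;> omega

lemma Tcnt_grows (ξ η : ℕ → ℝ)
    (hliminf : Filter.liminf (fun m : ℕ => (pSum ξ m : EReal)) Filter.atTop = ⊥)
    (n : ℕ) : ∃ m, n ≤ m ∧ Tcnt ξ η n + 1 ≤ Tcnt ξ η m := by
  by_contra h
  push_neg at h
  have hconst : ∀ m, n ≤ m → Tcnt ξ η m = Tcnt ξ η n := by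
    intro m hm
    have h1 := Tcnt_mono ξ η hm
    have h2 := h m hm
    omega
  set t := Tcnt ξ η n with ht
  have hgt : ∀ k, n ≤ k → pSum ξ k > -pSum η t := by
    intro k hk
    have hm : n ≤ k + t := le_trans hk (Nat.le_add_right _ _)
    have e1 : Tcnt ξ η (k + t) = t := hconst _ hm
    have e2 : Tcnt ξ η (k + t + 1) = t := hconst _ (le_trans hm (Nat.le_succ _))
    have e3 : Tcnt ξ η (k + t + 1)
        = Tcnt ξ η (k + t) + (if pSum ξ (k + t - Tcnt ξ η (k + t)) +
            pSum η (Tcnt ξ η (k + t)) ≤ 0 then 1 else 0) := rfl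
    rw [e1, e2] at e3
    have hcond : ¬ (pSum ξ (k + t - t) + pSum η t ≤ 0) := by
      intro hc
      rw [if_pos hc] at e3
      omega
    rw [Nat.add_sub_cancel] at hcond
    linarith [not_le.mp hcond]
  have hbdd : (((-pSum η t : ℝ) : EReal)) ≤
      Filter.liminf (fun m : ℕ => (pSum ξ m : EReal)) Filter.atTop := by
    refine Filter.le_liminf_of_le (by isBoundedDefault) ?_
    filter_upwards [Filter.eventually_ge_atTop n] with k hk
    exact_mod_cast (hgt k hk).le
  rw [hliminf, le_bot_iff] at hbdd
  exact EReal.coe_ne_bot _ hbdd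

/-- If `liminf_m S_ξ(m) = −∞`, then `T(k) → ∞` as `k → ∞`: the penalised walk
visits `(−∞, 0]` infinitely often. -/
theorem stmt5 (ξ η : ℕ → ℝ) (hη : ∀ i, 0 < η i)
    (hliminf : Filter.liminf (fun m : ℕ => (pSum ξ m : EReal)) Filter.atTop = ⊥) :
    Filter.Tendsto (Tcnt ξ η) Filter.atTop Filter.atTop := by
  apply tendsto_atTop_atTop_of_monotone (Tcnt_mono ξ η)
  intro b
  induction b with
  | zero => exact ⟨0, Nat.zero_le _⟩
  | succ b ih =>
    obtain ⟨n, hn⟩ := ih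
    obtain ⟨m, _, hm⟩ := Tcnt_grows ξ η hliminf n
    exact ⟨m, by omega⟩
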